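/- arXiv:1711.04793 — 2 statements merged into one kernel-verified Lean document; each statement's English description precedes it below -/
import Mathlib

section
/- If k : ℝ → ℝ is a symmetric (even) probability density kernel with cumulative integral K(x) = ∫_{-∞}^x k(t) dt, then ψ(k) := 2∫_{-∞}^∞ x K(x) k(x) dx equals ∫_{-∞}^∞ K(x)(1 − K(x)) dx, and in particular ψ(k) ≥ 0. -/
open MeasureTheory Set

/-- For a symmetric probability density kernel `k` with c.d.f. `K`,
`ψ(k) = 2∫ x K(x) k(x) dx = ∫ K(x)(1-K(x)) dx ≥ 0`. -/
theorem psi_eq_and_nonneg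
    (k K : ℝ → ℝ)
    (hk_int : Integrable k)
    (hk_even : ∀ x, k (-x) = k x)
    (hk_nonneg : ∀ x, 0 ≤ k x)
    (hk_one : ∫ x, k x = 1)
    (hK : ∀ x, K x = ∫ t in Set.Iic x, k t)
    (h1 : Integrable (fun x => x * K x * k x))
    (h2 : Integrable (fun x => K x * (1 - K x))) :
    2 * ∫ x, x * K x * k x = ∫ x, K x * (1 - K x) ∧
    0 ≤ 2 * ∫ x, x * K x * k x := by
  have hmk : AEStronglyMeasurable k (volume : Measure ℝ) := hk_int.1
  have hK_nonneg : ∀ x, 0 ≤ K x := fun x => by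
    rw [hK x]; exact integral_nonneg fun t => hk_nonneg t
  have hK_le : ∀ x, K x ≤ 1 := fun x => by
    rw [hK x, ← hk_one]
    exact setIntegral_le_integral hk_int (Filter.Eventually.of_forall hk_nonneg)
  have hIoi : ∀ x, ∫ t in Set.Ioi x, k t = 1 - K x := fun x => by
    have h := integral_add_compl (measurableSet_Iic (a := x)) hk_int
    rw [compl_Iic] at h
    rw [hK x]; linarith [h, hk_one]
  have hKneg : ∀ x, K (-x) = 1 - K x := fun x => by
    rw [hK (-x)]
    have h : ∫ t in Set.Iic (-x), k t = ∫ t in Set.Iic (-x), k (-t) := by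
      simp_rw [hk_even]
    rw [h, integral_comp_neg_Iic, neg_neg, hIoi x]
  -- x * k x is integrable with integral 0
  have hxk_eq : ∀ x, x * k x = x * K x * k x - (-x * K (-x) * k (-x)) := fun x => by
    rw [hKneg, hk_even]; ring
  have hf_negint : Integrable (fun x => -x * K (-x) * k (-x)) := h1.comp_neg
  have hxk_int : Integrable (fun x => x * k x) := by
    have h : (fun x => x * k x) = fun x => x * K x * k x - (-x * K (-x) * k (-x)) :=
      funext hxk_eq
    rw [h]; exact h1.sub hf_negint
  have hxk_zero : ∫ x, x * k x = 0 := by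
    calc ∫ x, x * k x = ∫ x, (x * K x * k x - (-x * K (-x) * k (-x))) := by
          simp_rw [← hxk_eq]
      _ = (∫ x, x * K x * k x) - ∫ x, -x * K (-x) * k (-x) := integral_sub h1 hf_negint
      _ = 0 := by
          rw [integral_neg_eq_self (fun x => x * K x * k x) volume]; ring
  -- product-measure setup
  set ν : Measure (ℝ × ℝ) := (volume : Measure ℝ).prod volume with hν
  set S : Set (ℝ × ℝ) := {p : ℝ × ℝ | p.1 ≤ p.2} with hSdef
  have hSm : MeasurableSet S := measurableSet_le measurable_fst measurable_snd
  set S' : Set (ℝ × ℝ) := {p : ℝ × ℝ | p.2 ≤ p.1} with hS'def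
  have hS'm : MeasurableSet S' := measurableSet_le measurable_snd measurable_fst
  set G₁ : ℝ × ℝ → ℝ := S.indicator (fun p => k p.1 * (p.2 * k p.2)) with hG₁def
  set G₂ : ℝ × ℝ → ℝ := S.indicator (fun p => (p.1 * k p.1) * k p.2) with hG₂def
  set G₂' : ℝ × ℝ → ℝ := S'.indicator (fun p => k p.1 * (p.2 * k p.2)) with hG₂'def
  set G₃ : ℝ × ℝ → ℝ := S.indicator (fun p => (p.2 - p.1) * (k p.1 * k p.2)) with hG₃def
  have hk1 : AEStronglyMeasurable (fun p : ℝ × ℝ => k p.1) ν :=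
    hmk.comp_quasiMeasurePreserving Measure.quasiMeasurePreserving_fst
  have hk2 : AEStronglyMeasurable (fun p : ℝ × ℝ => k p.2) ν :=
    hmk.comp_quasiMeasurePreserving Measure.quasiMeasurePreserving_snd
  have hxk1 : AEStronglyMeasurable (fun p : ℝ × ℝ => p.1 * k p.1) ν :=
    hxk_int.1.comp_quasiMeasurePreserving Measure.quasiMeasurePreserving_fst
  have hxk2 : AEStronglyMeasurable (fun p : ℝ × ℝ => p.2 * k p.2) ν :=
    hxk_int.1.comp_quasiMeasurePreserving Measure.quasiMeasurePreserving_snd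
  have hG₁m : AEStronglyMeasurable G₁ ν := (hk1.mul hxk2).indicator hSm
  have hG₂m : AEStronglyMeasurable G₂ ν := (hxk1.mul hk2).indicator hSm
  have hG₂'m : AEStronglyMeasurable G₂' ν := (hk1.mul hxk2).indicator hS'm
  have hdom1 : Integrable (fun p : ℝ × ℝ => k p.1 * (p.2 * k p.2)) ν :=
    hk_int.mul_prod hxk_int
  have hdom2 : Integrable (fun p : ℝ × ℝ => (p.1 * k p.1) * k p.2) ν :=
    hxk_int.mul_prod hk_int
  have hG₁i : Integrable G₁ ν :=
    hdom1.mono hG₁m (Filter.Eventually.of_forall fun p => norm_indicator_le_norm_self _ p)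
  have hG₂i : Integrable G₂ ν :=
    hdom2.mono hG₂m (Filter.Eventually.of_forall fun p => norm_indicator_le_norm_self _ p)
  have hG₂'i : Integrable G₂' ν :=
    hdom1.mono hG₂'m (Filter.Eventually.of_forall fun p => norm_indicator_le_norm_self _ p)
  -- C1 : ∫ G₁ = ∫ x K x k x
  have hC1 : ∫ p, G₁ p ∂ν = ∫ x, x * K x * k x := by
    rw [hν, integral_prod_symm _ hG₁i]
    have h : ∀ t : ℝ, (∫ s, G₁ (s, t)) = t * K t * k t := by
      intro t
      have he : (fun s => G₁ (s, t)) = (Set.Iic t).indicator (fun s => k s * (t * k t)) := by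
        funext s; by_cases h : s ≤ t <;> simp [hG₁def, Set.indicator, hSdef, h]
      rw [he, integral_indicator measurableSet_Iic, integral_mul_const, ← hK t]; ring
    simp_rw [h]
  -- C2 : ∫ G₂ = - ∫ G₁
  have hswap : ∫ p, G₂ p ∂ν = ∫ p, G₂' p ∂ν := by
    have h := (Measure.measurePreserving_swap (μ := (volume : Measure ℝ)) (ν := volume)).integral_comp
      (MeasurableEquiv.prodComm : ℝ × ℝ ≃ᵐ ℝ × ℝ).measurableEmbedding G₂
    rw [← hν] at h
    rw [← h]
    congr 1; funext p
    by_cases hp : p.2 ≤ p.1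
    · simp [hG₂def, hG₂'def, Set.indicator, hSdef, hS'def, hp, MeasurableEquiv.prodComm,
        Prod.swap]
      ring
    · simp [hG₂def, hG₂'def, Set.indicator, hSdef, hS'def, hp, MeasurableEquiv.prodComm,
        Prod.swap]
  have hdiag : ν {p : ℝ × ℝ | p.1 = p.2} = 0 := by
    have hm : MeasurableSet {p : ℝ × ℝ | p.1 = p.2} :=
      measurableSet_eq_fun measurable_fst measurable_snd
    rw [hν, Measure.prod_apply hm]
    have h : ∀ x : ℝ, (volume : Measure ℝ) (Prod.mk x ⁻¹' {p : ℝ × ℝ | p.1 = p.2}) = 0 := by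
      intro x
      have : (Prod.mk x ⁻¹' {p : ℝ × ℝ | p.1 = p.2}) = {x} := by
        ext y; simp [eq_comm]
      rw [this]; exact measure_singleton x
    simp [h]
  have hae : (fun p => G₁ p + G₂' p) =ᵐ[ν] fun p : ℝ × ℝ => k p.1 * (p.2 * k p.2) := by
    refine Filter.eventuallyEq_iff_exists_mem.mpr ⟨{p : ℝ × ℝ | p.1 = p.2}ᶜ, ?_, ?_⟩
    · rw [mem_ae_iff]; simpa using hdiag
    · intro p hp
      rcases lt_or_gt_of_ne (hp : ¬ p.1 = p.2) with h | h
      · simp [hG₁def, hG₂'def, Set.indicator, hSdef, hS'def, le_of_lt h, not_le.mpr h]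
      · simp [hG₁def, hG₂'def, Set.indicator, hSdef, hS'def, le_of_lt h, not_le.mpr h]
  have hsum : (∫ p, G₁ p ∂ν) + (∫ p, G₂' p ∂ν) = 0 := by
    rw [← integral_add hG₁i hG₂'i, integral_congr_ae hae, hν,
      integral_prod_mul k (fun x => x * k x), hk_one, hxk_zero, one_mul]
  have hC2 : ∫ p, G₂ p ∂ν = - ∫ p, G₁ p ∂ν := by rw [hswap]; linarith
  -- C3 : ∫ G₃ = 2 ∫ G₁
  have hG3eq : G₃ = fun p => G₁ p - G₂ p := by
    funext p
    by_cases h : p.1 ≤ p.2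
    · simp only [hG₃def, hG₁def, hG₂def, Set.indicator, hSdef, h]
      simp only [Set.mem_setOf_eq, h, if_true]
      ring
    · simp [hG₃def, hG₁def, hG₂def, Set.indicator, hSdef, h]
  have hC3 : ∫ p, G₃ p ∂ν = 2 * ∫ x, x * K x * k x := by
    rw [hG3eq, integral_sub hG₁i hG₂i, hC2, hC1]; ring
  -- C4 : ∫ G₃ = ∫ K (1 - K)  (via lintegrals / Tonelli)
  set κ : ℝ → ENNReal := fun x => ENNReal.ofReal (k x) with hκdef
  have hκ : AEMeasurable κ (volume : Measure ℝ) :=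
    ENNReal.measurable_ofReal.comp_aemeasurable hmk.aemeasurable
  have hκtop : ∀ x, κ x ≠ ⊤ := fun x => ENNReal.ofReal_ne_top
  have hKof : ∀ x, ENNReal.ofReal (K x) = ∫⁻ s in Iic x, κ s := fun x => by
    rw [hK x]
    exact ofReal_integral_eq_lintegral_ofReal hk_int.integrableOn
      (Filter.Eventually.of_forall fun t => hk_nonneg t)
  have hCof : ∀ x, ENNReal.ofReal (1 - K x) = ∫⁻ t in Ioi x, κ t := fun x => by
    rw [← hIoi x]
    exact ofReal_integral_eq_lintegral_ofReal hk_int.integrableOn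
      (Filter.Eventually.of_forall fun t => hk_nonneg t)
  set C : ℝ → ENNReal := fun x => ∫⁻ t in Ioi x, κ t with hCdef
  have hCeq : C = fun x => ENNReal.ofReal (1 - K x) := funext fun x => (hCof x).symm
  have hCanti : Antitone (fun x => 1 - K x) := by
    intro x y hxy
    simp only [← hIoi]
    exact setIntegral_mono_set hk_int.integrableOn
      (Filter.Eventually.of_forall fun t => hk_nonneg t)
      (HasSubset.Subset.eventuallyLE (Set.Ioi_subset_Ioi hxy))
  have hCmeas : Measurable C := by
    rw [hCeq]; exact ENNReal.measurable_ofReal.comp hCanti.measurable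
  have hCtop : ∀ x, C x ≠ ⊤ := fun x => by rw [hCeq]; exact ENNReal.ofReal_ne_top
  set T : ENNReal := ∫⁻ s, κ s * ∫⁻ t, κ t * ENNReal.ofReal (t - s) with hTdef
  have hL : (∫⁻ x, ENNReal.ofReal (K x * (1 - K x))) = T := by
    have e1 : ∀ x, ENNReal.ofReal (K x * (1 - K x))
        = ∫⁻ s, (Iic x).indicator κ s * C x := by
      intro x
      rw [ENNReal.ofReal_mul (hK_nonneg x), hKof, hCof, ← lintegral_indicator measurableSet_Iic _,
        ← lintegral_mul_const' (C x) _ (hCtop x)]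
    simp_rw [e1]
    rw [lintegral_lintegral_swap]
    · have e2 : ∀ s, (∫⁻ x, (Iic x).indicator κ s * C x) = κ s * ∫⁻ x in Ici s, C x := by
        intro s
        have e3 : (fun x => (Iic x).indicator κ s * C x)
            = (Ici s).indicator (fun x => κ s * C x) := by
          funext x
          by_cases h : s ≤ x <;> simp [Set.indicator, h]
        rw [e3, lintegral_indicator measurableSet_Ici _, lintegral_const_mul' _ _ (hκtop s)]
      simp_rw [e2]
      rw [hTdef]
      congr 1; funext s
      congr 1
      rw [hCdef]
      simp_rw [← lintegral_indicator measurableSet_Ioi _]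
      rw [lintegral_lintegral_swap]
      · congr 1; funext t
        have e4 : (fun x => (Ioi x).indicator κ t) = (Iio t).indicator (fun _ => κ t) := by
          funext x
          by_cases h : x < t <;> simp [Set.indicator, h]
        rw [e4, lintegral_indicator measurableSet_Iio _, setLIntegral_const,
          Measure.restrict_apply measurableSet_Iio]
        have : Iio t ∩ Ici s = Ico s t := by
          ext x; simp [Set.mem_Ico, and_comm]
        rw [this, Real.volume_Ico]
      · have : (Function.uncurry fun x t => (Ioi x).indicator κ t)
            = {p : ℝ × ℝ | p.1 < p.2}.indicator (fun q => κ q.2) := by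
          funext p
          by_cases h : p.1 < p.2 <;>
            simp [Function.uncurry, Set.indicator, h]
        rw [this]
        exact ((hκ.comp_quasiMeasurePreserving Measure.quasiMeasurePreserving_snd).indicator
          (measurableSet_lt measurable_fst measurable_snd))
    · have : (Function.uncurry fun x s => (Iic x).indicator κ s * C x)
          = fun p : ℝ × ℝ => (S'.indicator (fun q => κ q.2) p) * C p.1 := by
        funext p
        by_cases h : p.2 ≤ p.1 <;>
          simp [Function.uncurry, Set.indicator, hS'def, h]
      rw [this]
      exact ((hκ.comp_quasiMeasurePreserving Measure.quasiMeasurePreserving_snd).indicator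
        hS'm).mul (hCmeas.comp measurable_fst).aemeasurable
  have hG₃m : AEStronglyMeasurable G₃ ν :=
    ((measurable_snd.sub measurable_fst).aestronglyMeasurable.mul (hk1.mul hk2)).indicator hSm
  have hR : (∫⁻ p, ENNReal.ofReal (G₃ p) ∂ν) = T := by
    have hmeas : AEMeasurable (fun p => ENNReal.ofReal (G₃ p)) ν :=
      ENNReal.measurable_ofReal.comp_aemeasurable hG₃m.aemeasurable
    rw [hν, lintegral_prod _ hmeas]
    rw [hTdef]
    congr 1; funext s
    have e5 : ∀ t, ENNReal.ofReal (G₃ (s, t)) = κ s * (κ t * ENNReal.ofReal (t - s)) := by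
      intro t
      by_cases h : s ≤ t
      · have : G₃ (s, t) = (t - s) * (k s * k t) := by
          simp [hG₃def, Set.indicator, hSdef, h]
        rw [this, ENNReal.ofReal_mul (by linarith), ENNReal.ofReal_mul (hk_nonneg s)]
        ring
      · have h0 : G₃ (s, t) = 0 := by simp [hG₃def, Set.indicator, hSdef, h]
        have h1 : ENNReal.ofReal (t - s) = 0 := by
          rw [ENNReal.ofReal_eq_zero]; linarith [not_le.mp h]
        rw [h0, h1, ENNReal.ofReal_zero, mul_zero, mul_zero]
    simp_rw [e5]
    rw [lintegral_const_mul' _ _ (hκtop s)]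
  have hG₃nn : ∀ p, 0 ≤ G₃ p := by
    intro p
    rw [hG₃def]
    apply Set.indicator_nonneg
    intro q hq
    exact mul_nonneg (by exact sub_nonneg.mpr hq) (mul_nonneg (hk_nonneg _) (hk_nonneg _))
  have hgnn : ∀ x, 0 ≤ K x * (1 - K x) := fun x =>
    mul_nonneg (hK_nonneg x) (by linarith [hK_le x])
  have hC4 : ∫ p, G₃ p ∂ν = ∫ x, K x * (1 - K x) := by
    rw [integral_eq_lintegral_of_nonneg_ae (Filter.Eventually.of_forall hG₃nn) hG₃m,
      integral_eq_lintegral_of_nonneg_ae (Filter.Eventually.of_forall hgnn) h2.1,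
      hL, hR]
  -- conclusion
  have key : 2 * ∫ x, x * K x * k x = ∫ x, K x * (1 - K x) := by
    rw [← hC3, hC4]
  exact ⟨key, by rw [key]; exact integral_nonneg hgnn⟩
end

section
/- If k : ℝ → ℝ is bounded, integrable with ∫ k = 1, and |x k(x)| → 0 as |x| → ∞, and f is a probability density on ℝ, then for every point u at which f is continuous, ∫ f(u − b t) k(t) dt → f(u) as b → 0⁺. Consequently the expectation of the kernel density estimator, E[f̃(u)] = ∫ k_b(u − x) f(x) dx with k_b(x) = k(x/b)/b, converges to f(u) as b → 0⁺. -/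
/-!
Substituting `x = u - b t` turns the first integral into the second, and the second is
`∫ (c k(c (u - x))) f(x) dx` with `c = b⁻¹ → ∞`. For a nonnegative kernel this is Mathlib's
peak-function theorem `tendsto_integral_comp_smul_smul_of_integrable'`. A bounded signed kernel
with `∫ k = 1` is the difference of the nonnegative kernels `k + |k|` and `|k|`, both of positive
mass, and the decay `|x| |k x| → 0` passes to both; boundedness of `k` makes each rescaled
integrand integrable, so the integrals split accordingly.
-/

open MeasureTheory Filter Module Bornology Topology

section PeakFunction

variable {F E : Type*} [NormedAddCommGroup F] [NormedSpace ℝ F] [FiniteDimensional ℝ F]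
  [MeasurableSpace F] [BorelSpace F] {μ : Measure F} [μ.IsAddHaarMeasure]
  [NormedAddCommGroup E] [NormedSpace ℝ E] [CompleteSpace E]

theorem tendsto_integral_comp_smul_smul_of_integral_pos
    {φ : F → ℝ} (hφ : ∀ x, 0 ≤ φ x) (h'φ : 0 < ∫ x, φ x ∂μ)
    (h : Tendsto (fun x ↦ ‖x‖ ^ finrank ℝ F * φ x) (cobounded F) (𝓝 0))
    {g : F → E} {x₀ : F} (hg : Integrable g μ) (h'g : ContinuousAt g x₀) :
    Tendsto (fun c : ℝ ↦ ∫ x, (c ^ finrank ℝ F * φ (c • (x₀ - x))) • g x ∂μ)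
      atTop (𝓝 ((∫ x, φ x ∂μ) • g x₀)) := by
  set p := ∫ x, φ x ∂μ
  have hnormalized : Tendsto
      (fun c : ℝ ↦ ∫ x, (c ^ finrank ℝ F * (p⁻¹ * φ (c • (x₀ - x)))) • g x ∂μ)
      atTop (𝓝 (g x₀)) := by
    refine tendsto_integral_comp_smul_smul_of_integrable' (φ := fun y ↦ p⁻¹ * φ y)
      (fun x ↦ mul_nonneg (inv_nonneg.2 h'φ.le) (hφ x)) ?_ ?_ hg h'g
    · rw [integral_const_mul, inv_mul_cancel₀ h'φ.ne']
    · simpa [mul_left_comm] using h.const_mul p⁻¹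
  refine (hnormalized.const_smul p).congr fun c ↦ ?_
  simp_rw [mul_left_comm _ p⁻¹, ← smul_smul, integral_smul, smul_inv_smul₀ h'φ.ne']

theorem tendsto_integral_comp_smul_smul_of_bounded
    {φ : F → ℝ} (hφ : ∃ C, ∀ x, |φ x| ≤ C) (h'φ : ∫ x, φ x ∂μ = 1)
    (h : Tendsto (fun x ↦ ‖x‖ ^ finrank ℝ F * |φ x|) (cobounded F) (𝓝 0))
    {g : F → E} {x₀ : F} (hg : Integrable g μ) (h'g : ContinuousAt g x₀) :
    Tendsto (fun c : ℝ ↦ ∫ x, (c ^ finrank ℝ F * φ (c • (x₀ - x))) • g x ∂μ)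
      atTop (𝓝 (g x₀)) := by
  obtain ⟨C, hC⟩ := hφ
  have hφ_int : Integrable φ μ := integrable_of_integral_eq_one h'φ
  have h_abs_pos : 0 < ∫ x, |φ x| ∂μ := by
    have := abs_integral_le_integral_abs (f := φ) (μ := μ)
    rw [h'φ, abs_one] at this
    linarith
  have h_nonneg : ∀ x, 0 ≤ φ x + |φ x| := fun x ↦ by linarith [neg_abs_le (φ x)]
  have h_add_abs_pos : 0 < ∫ x, φ x + |φ x| ∂μ := by
    rw [integral_add hφ_int hφ_int.abs, h'φ]; linarith
  have h_tail : Tendsto (fun x ↦ ‖x‖ ^ finrank ℝ F * (φ x + |φ x|)) (cobounded F) (𝓝 0) := by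
    refine squeeze_zero (fun x ↦ ?_) (fun x ↦ ?_) (by simpa using h.const_mul 2)
    · exact mul_nonneg (by positivity) (h_nonneg x)
    · rw [mul_left_comm]
      gcongr
      linarith [le_abs_self (φ x)]
  have hlim := (tendsto_integral_comp_smul_smul_of_integral_pos h_nonneg h_add_abs_pos h_tail
      hg h'g).sub
    (tendsto_integral_comp_smul_smul_of_integral_pos (fun x ↦ abs_nonneg (φ x)) h_abs_pos
      (by simpa using h) hg h'g)
  rw [← sub_smul, integral_add hφ_int hφ_int.abs, h'φ, add_sub_cancel_right, one_smul] at hlim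
  refine hlim.congr' ?_
  filter_upwards [eventually_gt_atTop 0] with c hc
  have h_integrable : ∀ (ψ : F → ℝ) (D : ℝ), Integrable ψ μ → (∀ x, |ψ x| ≤ D) →
      Integrable (fun x ↦ (c ^ finrank ℝ F * ψ (c • (x₀ - x))) • g x) μ := fun ψ D hψ hψD ↦
    hg.bdd_smul (c ^ finrank ℝ F * D)
      (((hψ.comp_smul hc.ne').comp_sub_left x₀).aestronglyMeasurable.const_mul _)
      (Eventually.of_forall fun x ↦ by
        rw [norm_mul, norm_pow, Real.norm_of_nonneg hc.le, Real.norm_eq_abs]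
        exact mul_le_mul_of_nonneg_left (hψD _) (by positivity))
  rw [← integral_sub]
  · simp_rw [← sub_smul, ← mul_sub, add_sub_cancel_right]
  · exact h_integrable (fun x ↦ φ x + |φ x|) (2 * C) (hφ_int.add hφ_int.abs) fun x ↦ by
      rw [abs_of_nonneg (h_nonneg x)]; linarith [le_abs_self (φ x), hC x]
  · exact h_integrable _ C hφ_int.abs fun x ↦ by rw [abs_abs]; exact hC x

end PeakFunction

theorem integral_comp_sub_div_div_mul_eq {k f : ℝ → ℝ} (u : ℝ) {b : ℝ} (hb : 0 < b) :
    ∫ x, k ((u - x) / b) / b * f x = ∫ t, f (u - b * t) * k t := by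
  have hscale : ∫ t, f (u - b * t) * k t = b⁻¹ * ∫ y, f (u - y) * k (y / b) := by
    have := Measure.integral_comp_mul_left (fun y ↦ f (u - y) * k (y / b)) b
    simp only [mul_div_cancel_left₀ _ hb.ne', abs_of_pos (inv_pos.2 hb), smul_eq_mul] at this
    exact this
  have hreflect : ∫ y, f (u - y) * k (y / b) = ∫ x, f x * k ((u - x) / b) := by
    simpa only [sub_sub_cancel] using
      integral_sub_left_eq_self (fun x ↦ f x * k ((u - x) / b)) volume u
  rw [hscale, hreflect, ← integral_const_mul]
  congr 1 with x
  ring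

theorem kernel_smoother_converges_at_continuity_point_general
    (k f : ℝ → ℝ)
    (hk_bdd : ∃ C, ∀ x, |k x| ≤ C)
    (hk_one : ∫ x, k x = 1)
    (hk_tail_top : Tendsto (fun x => |x * k x|) atTop (nhds 0))
    (hk_tail_bot : Tendsto (fun x => |x * k x|) atBot (nhds 0))
    (hf_int : Integrable f)
    (u : ℝ) (hu : ContinuousAt f u) :
    Tendsto (fun b => ∫ t, f (u - b * t) * k t) (nhdsWithin 0 (Set.Ioi 0))
      (nhds (f u)) ∧
    Tendsto (fun b => ∫ x, (k ((u - x) / b) / b) * f x) (nhdsWithin 0 (Set.Ioi 0))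
      (nhds (f u)) := by
  have hk_tail : Tendsto (fun x ↦ ‖x‖ ^ finrank ℝ ℝ * |k x|) (cobounded ℝ) (𝓝 0) := by
    simpa only [IsOrderBornology.cobounded_eq, tendsto_sup, finrank_self, pow_one,
      Real.norm_eq_abs, ← abs_mul] using ⟨hk_tail_bot, hk_tail_top⟩
  have hsmoother : Tendsto (fun b ↦ ∫ x, k ((u - x) / b) / b * f x) (𝓝[>] 0) (𝓝 (f u)) := by
    refine ((tendsto_integral_comp_smul_smul_of_bounded hk_bdd hk_one hk_tail hf_int hu).comp
      tendsto_inv_nhdsGT_zero).congr fun b ↦ ?_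
    simp only [Function.comp_apply, finrank_self, pow_one, smul_eq_mul, inv_mul_eq_div]
  refine ⟨hsmoother.congr' ?_, hsmoother⟩
  filter_upwards [self_mem_nhdsWithin] with b hb
  exact integral_comp_sub_div_div_mul_eq u hb

/-- Bochner-type approximate identity lemma: the expectation of the kernel density
estimator converges to `f(u)` at continuity points of `f` as `b → 0⁺`. -/
theorem kernel_smoother_converges_at_continuity_point
    (k f : ℝ → ℝ)
    (hk_int : Integrable k)
    (hk_bdd : ∃ C, ∀ x, |k x| ≤ C)
    (hk_one : ∫ x, k x = 1)
    (hk_tail_top : Tendsto (fun x => |x * k x|) atTop (nhds 0))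
    (hk_tail_bot : Tendsto (fun x => |x * k x|) atBot (nhds 0))
    (hf_int : Integrable f)
    (hf_nonneg : ∀ x, 0 ≤ f x)
    (hf_one : ∫ x, f x = 1)
    (u : ℝ) (hu : ContinuousAt f u) :
    Tendsto (fun b => ∫ t, f (u - b * t) * k t) (nhdsWithin 0 (Set.Ioi 0))
      (nhds (f u)) ∧
    Tendsto (fun b => ∫ x, (k ((u - x) / b) / b) * f x) (nhdsWithin 0 (Set.Ioi 0))
      (nhds (f u)) :=
  kernel_smoother_converges_at_continuity_point_general k f hk_bdd hk_one hk_tail_top hk_tail_bot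
    hf_int u hu
end
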